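/- arXiv:2108.03776 — 2 statements merged into one kernel-verified Lean document; each statement's English description precedes it below -/
import Mathlib

section
/- For all μ⁺, μ⁻ > 0 and ϱ > 0 there exists a constant C > 0 depending only on μ⁺, μ⁻ and ϱ with the following property: for every ϱ-shape-regular triangle T, every cut configuration (D, E, n, T⁺, T⁻) as in the setup, and every local IFE pair (v⁺, v⁻, q⁺, q⁻), the pressure jump across the discrete interface satisfies h_T · ‖E − D‖ · (q⁺ − q⁻)² ≤ C (‖∇v⁺‖_F² |T⁺| + ‖∇v⁻‖_F² |T⁻|). -/
open MeasureTheory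

noncomputable section

namespace StokesIFE

/-- Euclidean inner product on `ℝ²`. -/
def dot (x y : Fin 2 → ℝ) : ℝ := x 0 * y 0 + x 1 * y 1

/-- Euclidean length of a vector of `ℝ²`. -/
def len (x : Fin 2 → ℝ) : ℝ := Real.sqrt (dot x x)

/-- Strain tensor `ε(A) = (A + Aᵀ)/2`. -/
def eps (A : Matrix (Fin 2) (Fin 2) ℝ) : Matrix (Fin 2) (Fin 2) ℝ :=
  (2⁻¹ : ℝ) • (A + A.transpose)

/-- Cauchy stress tensor `σ(μ, A, q) = 2 μ ε(A) − q I₂`. -/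
def sig (μ : ℝ) (A : Matrix (Fin 2) (Fin 2) ℝ) (q : ℝ) : Matrix (Fin 2) (Fin 2) ℝ :=
  (2 * μ) • eps A - q • (1 : Matrix (Fin 2) (Fin 2) ℝ)

/-- Mean value of `u` over the segment `[P, Q]` with respect to arclength,
expressed through the affine parametrization of the segment. -/
def edgeMean (P Q : Fin 2 → ℝ) (u : (Fin 2 → ℝ) → ℝ) : ℝ :=
  ∫ s in (0:ℝ)..1, u (P + s • (Q - P))

/-- Two-dimensional Lebesgue area of a subset of `ℝ²`. -/
def area (s : Set (Fin 2 → ℝ)) : ℝ := (volume s).toReal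

/-- Squared Frobenius norm of a 2×2 matrix. -/
def frobSq (A : Matrix (Fin 2) (Fin 2) ℝ) : ℝ := ∑ i : Fin 2, ∑ j : Fin 2, (A i j) ^ 2

/-- A triangle `T = conv{A₁, A₂, A₃}` cut by the segment `[D, E]`, where
`D` lies in the open edge `(A₂, A₃)`, `E` lies in the open edge `(A₁, A₃)`,
and `n` is the unit normal of `E − D` pointing towards `A₃`. -/
structure CutTriangle where
  A₁ : Fin 2 → ℝ
  A₂ : Fin 2 → ℝ
  A₃ : Fin 2 → ℝ
  D : Fin 2 → ℝ
  E : Fin 2 → ℝ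
  n : Fin 2 → ℝ
  indep : AffineIndependent ℝ ![A₁, A₂, A₃]
  hD : D ∈ openSegment ℝ A₂ A₃
  hE : E ∈ openSegment ℝ A₁ A₃
  hn_unit : dot n n = 1
  hn_orth : dot n (E - D) = 0
  hn_sign : 0 < dot n (A₃ - D)

namespace CutTriangle

variable (c : CutTriangle)

/-- Tangent vector `t = (n₂, −n₁)`, the rotation of `n` by `−π/2`. -/
def t : Fin 2 → ℝ := ![c.n 1, -(c.n 0)]

/-- The closed triangle. -/
def T : Set (Fin 2 → ℝ) := convexHull ℝ {c.A₁, c.A₂, c.A₃}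

/-- The part of the triangle on the `+` side of the cut. -/
def Tplus : Set (Fin 2 → ℝ) := c.T ∩ {x | 0 ≤ dot c.n (x - c.D)}

/-- The part of the triangle on the `−` side of the cut. -/
def Tminus : Set (Fin 2 → ℝ) := c.T ∩ {x | dot c.n (x - c.D) ≤ 0}

/-- The piecewise linear function `w(x) = max(⟨n, x − D⟩, 0)`. -/
def w (x : Fin 2 → ℝ) : ℝ := max (dot c.n (x - c.D)) 0

/-- `(g, b)` represents the Crouzeix–Raviart interpolant `x ↦ ⟨g, x⟩ + b` of `u` on `T`:
an affine map whose mean value over each of the three edges coincides with that of `u`. -/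
def IsCR (u : (Fin 2 → ℝ) → ℝ) (g : Fin 2 → ℝ) (b : ℝ) : Prop :=
  edgeMean c.A₂ c.A₃ (fun x => dot g x + b) = edgeMean c.A₂ c.A₃ u ∧
  edgeMean c.A₁ c.A₃ (fun x => dot g x + b) = edgeMean c.A₁ c.A₃ u ∧
  edgeMean c.A₁ c.A₂ (fun x => dot g x + b) = edgeMean c.A₁ c.A₂ u

/-- The componentwise Crouzeix–Raviart interpolant `x ↦ Mπ x + bπ` of a vector-valued `u`. -/
def IsCRvec (u : (Fin 2 → ℝ) → Fin 2 → ℝ) (Mπ : Matrix (Fin 2) (Fin 2) ℝ)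
    (bπ : Fin 2 → ℝ) : Prop :=
  ∀ j : Fin 2, c.IsCR (fun x => u x j) (Mπ j) (bπ j)

/-- The piecewise velocity: `x ↦ Mp x + bp` on the `+` side and `x ↦ Mm x + bm`
on the `−` side. -/
def vtilde (Mp : Matrix (Fin 2) (Fin 2) ℝ) (bp : Fin 2 → ℝ)
    (Mm : Matrix (Fin 2) (Fin 2) ℝ) (bm : Fin 2 → ℝ) (x : Fin 2 → ℝ) : Fin 2 → ℝ :=
  if 0 ≤ dot c.n (x - c.D) then Mp.mulVec x + bp else Mm.mulVec x + bm

/-- The seven local degrees of freedom: edge means of the two velocity components over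
the edges `e₁ = [A₂,A₃]`, `e₂ = [A₁,A₃]`, `e₃ = [A₁,A₂]`, and the mean of the
piecewise-constant pressure over `T`. -/
def dof (Mp : Matrix (Fin 2) (Fin 2) ℝ) (bp : Fin 2 → ℝ)
    (Mm : Matrix (Fin 2) (Fin 2) ℝ) (bm : Fin 2 → ℝ) (qp qm : ℝ) : Fin 7 → ℝ :=
  ![edgeMean c.A₂ c.A₃ (fun x => c.vtilde Mp bp Mm bm x 0),
    edgeMean c.A₁ c.A₃ (fun x => c.vtilde Mp bp Mm bm x 0),
    edgeMean c.A₁ c.A₂ (fun x => c.vtilde Mp bp Mm bm x 0),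
    edgeMean c.A₂ c.A₃ (fun x => c.vtilde Mp bp Mm bm x 1),
    edgeMean c.A₁ c.A₃ (fun x => c.vtilde Mp bp Mm bm x 1),
    edgeMean c.A₁ c.A₂ (fun x => c.vtilde Mp bp Mm bm x 1),
    (area c.Tplus * qp + area c.Tminus * qm) / area c.T]

/-- A local IFE pair: affine velocities `v± = Mp/Mm · x + bp/bm` and constant pressures
`q±` satisfying the stress-jump condition (J1), continuity of the velocity on `[D,E]` (J2)
and continuity of the divergence (J3). -/
def IsIFEPair (μp μm : ℝ) (Mp : Matrix (Fin 2) (Fin 2) ℝ) (bp : Fin 2 → ℝ)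
    (Mm : Matrix (Fin 2) (Fin 2) ℝ) (bm : Fin 2 → ℝ) (qp qm : ℝ) : Prop :=
  (sig μp Mp qp).mulVec c.n = (sig μm Mm qm).mulVec c.n ∧
  (∀ x ∈ segment ℝ c.D c.E, Mp.mulVec x + bp = Mm.mulVec x + bm) ∧
  Mp.trace = Mm.trace

/-- The diameter of the triangle (its longest edge). -/
def hT : ℝ := max (len (c.A₂ - c.A₁)) (max (len (c.A₃ - c.A₁)) (len (c.A₃ - c.A₂)))

/-- The perimeter of the triangle. -/
def perim : ℝ := len (c.A₂ - c.A₁) + len (c.A₃ - c.A₁) + len (c.A₃ - c.A₂)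

/-- The inradius of the triangle, `r_T = 2|T| / perimeter`. -/
def rT : ℝ := 2 * area c.T / c.perim

/-- `ϱ`-shape-regularity: `h_T ≤ ϱ r_T`. -/
def ShapeReg (ϱ : ℝ) : Prop := c.hT ≤ ϱ * c.rT

/-- Arclength of the part of the edge `[P,Q]` lying on the `+` side of the cut. -/
def edgeLenPlus (P Q : Fin 2 → ℝ) : ℝ :=
  len (Q - P) *
    (volume {s : ℝ | s ∈ Set.Icc (0:ℝ) 1 ∧ 0 ≤ dot c.n (P + s • (Q - P) - c.D)}).toReal

/-- Arclength of the part of the edge `[P,Q]` lying on the `−` side of the cut. -/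
def edgeLenMinus (P Q : Fin 2 → ℝ) : ℝ :=
  len (Q - P) *
    (volume {s : ℝ | s ∈ Set.Icc (0:ℝ) 1 ∧ dot c.n (P + s • (Q - P) - c.D) ≤ 0}).toReal

/-- Total arclength of `∂T ∩ T⁺`. -/
def bdryLenPlus : ℝ :=
  c.edgeLenPlus c.A₂ c.A₃ + c.edgeLenPlus c.A₁ c.A₃ + c.edgeLenPlus c.A₁ c.A₂

/-- Total arclength of `∂T ∩ T⁻`. -/
def bdryLenMinus : ℝ :=
  c.edgeLenMinus c.A₂ c.A₃ + c.edgeLenMinus c.A₁ c.A₃ + c.edgeLenMinus c.A₁ c.A₂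

end CutTriangle


/-! Continuity of the velocity along `[D, E]` gives `∇v⁺ t = ∇v⁻ t`; since the trace is
`⟨n, ∇v n⟩ + ⟨t, ∇v t⟩`, condition (J3) then also gives `⟨n, ∇v⁺ n⟩ = ⟨n, ∇v⁻ n⟩`. The normal
component of (J1) now reads `q⁺ − q⁻ = 2 (μ⁺ − μ⁻) ⟨n, ∇v^± n⟩`, and `⟨n, ∇v n⟩² ≤ ‖∇v‖_F²`.
On the geometric side `‖E − D‖ ≤ 2 h_T`, while `h_T ≤ perimeter` turns shape regularity into
`h_T² ≤ 2ϱ |T| ≤ 2ϱ (|T⁺| + |T⁻|)`. -/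

open Matrix

lemma len_eq_norm (x : Fin 2 → ℝ) : len x = ‖WithLp.toLp 2 x‖ := by
  simp [len, dot, EuclideanSpace.norm_eq, Fin.sum_univ_two, ← sq]

lemma dot_mulVec_eps (A : Matrix (Fin 2) (Fin 2) ℝ) (n : Fin 2 → ℝ) :
    dot n (eps A *ᵥ n) = dot n (A *ᵥ n) := by
  simp only [dot, eps, mulVec, dotProduct, Fin.sum_univ_two, Matrix.smul_apply,
    Matrix.add_apply, transpose_apply, smul_eq_mul]
  ring

lemma dot_mulVec_sig {n : Fin 2 → ℝ} (hn : dot n n = 1) (μ q : ℝ)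
    (A : Matrix (Fin 2) (Fin 2) ℝ) :
    dot n (sig μ A q *ᵥ n) = 2 * μ * dot n (A *ᵥ n) - q := by
  rw [sig, sub_mulVec, smul_mulVec, smul_mulVec, one_mulVec, ← dot_mulVec_eps]
  simp only [dot, Pi.sub_apply, Pi.smul_apply, smul_eq_mul] at hn ⊢
  linear_combination (-q) * hn

lemma trace_eq_dot_mulVec_add_dot_mulVec {n : Fin 2 → ℝ} (hn : dot n n = 1)
    (A : Matrix (Fin 2) (Fin 2) ℝ) :
    A.trace = dot n (A *ᵥ n) + dot ![n 1, -n 0] (A *ᵥ ![n 1, -n 0]) := by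
  simp only [dot, trace, diag, mulVec, dotProduct, Fin.sum_univ_two] at hn ⊢
  simp
  linear_combination (-(A 0 0 + A 1 1)) * hn

lemma sq_dot_mulVec_le_frobSq {n : Fin 2 → ℝ} (hn : dot n n = 1)
    (A : Matrix (Fin 2) (Fin 2) ℝ) : dot n (A *ᵥ n) ^ 2 ≤ frobSq A := by
  have hcs := Finset.sum_mul_sq_le_sq_mul_sq (Finset.univ : Finset (Fin 2 × Fin 2))
    (fun p => A p.1 p.2) (fun p => n p.1 * n p.2)
  simp only [Fintype.sum_prod_type, dot, mulVec, dotProduct, Fin.sum_univ_two, frobSq] at hcs hn ⊢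
  have hn4 : (n 0 * n 0) ^ 2 + (n 0 * n 1) ^ 2 + ((n 1 * n 0) ^ 2 + (n 1 * n 1) ^ 2) = 1 := by
    linear_combination (n 0 * n 0 + n 1 * n 1 + 1) * hn
  rw [hn4, mul_one] at hcs
  linarith

lemma eq_smul_rot_of_dot_eq_zero {n v : Fin 2 → ℝ} (hn : dot n n = 1) (hv : dot n v = 0) :
    v = dot ![n 1, -n 0] v • ![n 1, -n 0] := by
  simp only [dot] at hn hv ⊢
  ext i; fin_cases i <;> simp
  · linear_combination (-(v 0)) * hn + n 0 * hv
  · linear_combination (-(v 1)) * hn + n 1 * hv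

namespace CutTriangle

variable (c : CutTriangle)

lemma E_ne_D : c.E ≠ c.D := by
  obtain ⟨α, β, -, -, hαβ, hD⟩ := c.hD
  obtain ⟨γ, δ, hγ, -, hγδ, hE⟩ := c.hE
  intro h
  have hw := affineIndependent_iff.mp c.indep Finset.univ ![γ, -α, δ - β]
    (by simp [Fin.sum_univ_three]; linarith)
    (by simp [Fin.sum_univ_three]; linear_combination (norm := module) hE - hD + h)
    0 (Finset.mem_univ _)
  simp at hw
  linarith

lemma exists_E_sub_D_eq : ∃ α γ : ℝ, 0 < α ∧ α < 1 ∧ 0 < γ ∧ γ < 1 ∧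
    c.E - c.D = α • (c.A₃ - c.A₂) - γ • (c.A₃ - c.A₁) := by
  obtain ⟨α, β, hα, hβ, hαβ, hD⟩ := c.hD
  obtain ⟨γ, δ, hγ, hδ, hγδ, hE⟩ := c.hE
  refine ⟨α, γ, hα, by linarith, hγ, by linarith, ?_⟩
  linear_combination (norm := module) hD - hE + hγδ • c.A₃ - hαβ • c.A₃

lemma len_E_sub_D_le : len (c.E - c.D) ≤ 2 * c.hT := by
  obtain ⟨α, γ, hα, hα1, hγ, hγ1, hED⟩ := c.exists_E_sub_D_eq
  have h₁ : len (c.A₃ - c.A₁) ≤ c.hT := (le_max_left _ _).trans (le_max_right _ _)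
  have h₂ : len (c.A₃ - c.A₂) ≤ c.hT := (le_max_right _ _).trans (le_max_right _ _)
  simp only [len_eq_norm] at h₁ h₂ ⊢
  calc ‖WithLp.toLp 2 (c.E - c.D)‖
      ≤ α * ‖WithLp.toLp 2 (c.A₃ - c.A₂)‖ + γ * ‖WithLp.toLp 2 (c.A₃ - c.A₁)‖ := by
        rw [hED, WithLp.toLp_sub, WithLp.toLp_smul, WithLp.toLp_smul]
        refine (norm_sub_le _ _).trans_eq ?_
        rw [norm_smul, norm_smul, Real.norm_of_nonneg hα.le, Real.norm_of_nonneg hγ.le]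
    _ ≤ 1 * c.hT + 1 * c.hT := by gcongr
    _ = 2 * c.hT := by ring

lemma hT_nonneg : 0 ≤ c.hT :=
  (Real.sqrt_nonneg _).trans (le_max_left _ _)

lemma hT_le_perim : c.hT ≤ c.perim := by
  have h₁ : 0 ≤ len (c.A₂ - c.A₁) := Real.sqrt_nonneg _
  have h₂ : 0 ≤ len (c.A₃ - c.A₁) := Real.sqrt_nonneg _
  have h₃ : 0 ≤ len (c.A₃ - c.A₂) := Real.sqrt_nonneg _
  simp only [hT, perim, max_le_iff]
  refine ⟨?_, ?_, ?_⟩ <;> linarith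

lemma area_T_le : area c.T ≤ area c.Tplus + area c.Tminus := by
  have hT : volume c.T ≠ ⊤ :=
    (Set.Finite.isCompact_convexHull ℝ (Set.toFinite _)).measure_lt_top.ne
  have hplus : volume c.Tplus ≠ ⊤ := measure_ne_top_of_subset Set.inter_subset_left hT
  have hminus : volume c.Tminus ≠ ⊤ := measure_ne_top_of_subset Set.inter_subset_left hT
  have hcover : c.T ⊆ c.Tplus ∪ c.Tminus := fun x hx =>
    (le_total 0 (dot c.n (x - c.D))).imp (⟨hx, ·⟩) (⟨hx, ·⟩)
  rw [area, area, area, ← ENNReal.toReal_add hplus hminus]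
  exact ENNReal.toReal_mono (ENNReal.add_ne_top.mpr ⟨hplus, hminus⟩)
    ((measure_mono hcover).trans (measure_union_le _ _))

variable {c}

lemma ShapeReg.sq_hT_le {ϱ : ℝ} (hϱ : 0 ≤ ϱ) (h : c.ShapeReg ϱ) :
    c.hT ^ 2 ≤ 2 * ϱ * area c.T := by
  have harea : 0 ≤ area c.T := ENNReal.toReal_nonneg
  have hratio : c.hT / c.perim ≤ 1 :=
    div_le_one_of_le₀ c.hT_le_perim (c.hT_nonneg.trans c.hT_le_perim)
  calc c.hT ^ 2 ≤ c.hT * (ϱ * (2 * area c.T / c.perim)) := by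
        rw [sq]; exact mul_le_mul_of_nonneg_left h c.hT_nonneg
    _ = 2 * ϱ * area c.T * (c.hT / c.perim) := by ring
    _ ≤ 2 * ϱ * area c.T := mul_le_of_le_one_right (by positivity) hratio

lemma ShapeReg.hT_mul_len_le {ϱ : ℝ} (hϱ : 0 ≤ ϱ) (h : c.ShapeReg ϱ) :
    c.hT * len (c.E - c.D) ≤ 4 * ϱ * (area c.Tplus + area c.Tminus) :=
  calc c.hT * len (c.E - c.D) ≤ c.hT * (2 * c.hT) :=
        mul_le_mul_of_nonneg_left c.len_E_sub_D_le c.hT_nonneg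
    _ = 2 * c.hT ^ 2 := by ring
    _ ≤ 2 * (2 * ϱ * area c.T) := by gcongr; exact h.sq_hT_le hϱ
    _ = 4 * ϱ * area c.T := by ring
    _ ≤ 4 * ϱ * (area c.Tplus + area c.Tminus) := by gcongr; exact c.area_T_le

namespace IsIFEPair

variable {μp μm : ℝ} {Mp Mm : Matrix (Fin 2) (Fin 2) ℝ} {bp bm : Fin 2 → ℝ} {qp qm : ℝ}

lemma mulVec_t_eq (h : c.IsIFEPair μp μm Mp bp Mm bm qp qm) : Mp *ᵥ c.t = Mm *ᵥ c.t := by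
  have hD := h.2.1 c.D (left_mem_segment ℝ c.D c.E)
  have hE := h.2.1 c.E (right_mem_segment ℝ c.D c.E)
  have hjump : (Mp - Mm) *ᵥ (c.E - c.D) = 0 := by
    rw [sub_mulVec, mulVec_sub, mulVec_sub]
    linear_combination (norm := module) hE - hD
  have hl : dot c.t (c.E - c.D) ≠ 0 := by
    intro hl
    apply c.E_ne_D
    rw [← sub_eq_zero, eq_smul_rot_of_dot_eq_zero c.hn_unit c.hn_orth]
    exact smul_eq_zero_of_left hl _
  rw [eq_smul_rot_of_dot_eq_zero c.hn_unit c.hn_orth, mulVec_smul] at hjump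
  rw [← sub_eq_zero, ← sub_mulVec]
  exact (smul_eq_zero.mp hjump).resolve_left hl

lemma dot_mulVec_n_eq (h : c.IsIFEPair μp μm Mp bp Mm bm qp qm) :
    dot c.n (Mp *ᵥ c.n) = dot c.n (Mm *ᵥ c.n) := by
  have htrace := trace_eq_dot_mulVec_add_dot_mulVec c.hn_unit (Mp - Mm)
  rw [trace_sub, h.2.2, sub_self, sub_mulVec, sub_mulVec, show ![c.n 1, -c.n 0] = c.t from rfl,
    h.mulVec_t_eq, sub_self] at htrace
  simp only [dot, Pi.sub_apply, Pi.zero_apply] at htrace ⊢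
  linarith

lemma pressure_jump_eq (h : c.IsIFEPair μp μm Mp bp Mm bm qp qm) :
    qp - qm = 2 * (μp - μm) * dot c.n (Mp *ᵥ c.n) := by
  have hstress := congrArg (dot c.n) h.1
  rw [dot_mulVec_sig c.hn_unit, dot_mulVec_sig c.hn_unit, ← h.dot_mulVec_n_eq] at hstress
  linear_combination -hstress

lemma sq_pressure_jump_le (h : c.IsIFEPair μp μm Mp bp Mm bm qp qm) :
    (qp - qm) ^ 2 ≤ 4 * (μp - μm) ^ 2 * frobSq Mp ∧
      (qp - qm) ^ 2 ≤ 4 * (μp - μm) ^ 2 * frobSq Mm := by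
  have hsq : ∀ M, dot c.n (M *ᵥ c.n) = dot c.n (Mp *ᵥ c.n) →
      (qp - qm) ^ 2 ≤ 4 * (μp - μm) ^ 2 * frobSq M := fun M hM => by
    calc (qp - qm) ^ 2 = 4 * (μp - μm) ^ 2 * dot c.n (M *ᵥ c.n) ^ 2 := by
          rw [h.pressure_jump_eq, ← hM]; ring
      _ ≤ 4 * (μp - μm) ^ 2 * frobSq M := by gcongr; exact sq_dot_mulVec_le_frobSq c.hn_unit M
  exact ⟨hsq Mp rfl, hsq Mm h.dot_mulVec_n_eq.symm⟩

end IsIFEPair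

end CutTriangle

theorem statement11_general (μp μm ϱ : ℝ) (hϱ : 0 < ϱ) :
    ∃ C : ℝ, 0 < C ∧ ∀ (c : CutTriangle), c.ShapeReg ϱ →
      ∀ (Mp Mm : Matrix (Fin 2) (Fin 2) ℝ) (bp bm : Fin 2 → ℝ) (qp qm : ℝ),
        c.IsIFEPair μp μm Mp bp Mm bm qp qm →
        c.hT * len (c.E - c.D) * (qp - qm) ^ 2 ≤
          C * (frobSq Mp * area c.Tplus + frobSq Mm * area c.Tminus) := by
  refine ⟨16 * ϱ * (μp - μm) ^ 2 + 1, by positivity, ?_⟩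
  intro c hreg Mp Mm bp bm qp qm hIFE
  obtain ⟨hq_plus, hq_minus⟩ := hIFE.sq_pressure_jump_le
  have hp : 0 ≤ area c.Tplus := ENNReal.toReal_nonneg
  have hm : 0 ≤ area c.Tminus := ENNReal.toReal_nonneg
  have hFp : 0 ≤ frobSq Mp := by unfold frobSq; positivity
  have hFm : 0 ≤ frobSq Mm := by unfold frobSq; positivity
  calc c.hT * len (c.E - c.D) * (qp - qm) ^ 2
      ≤ 4 * ϱ * (area c.Tplus + area c.Tminus) * (qp - qm) ^ 2 :=
        mul_le_mul_of_nonneg_right (hreg.hT_mul_len_le hϱ.le) (sq_nonneg _)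
    _ = 4 * ϱ * (area c.Tplus * (qp - qm) ^ 2 + area c.Tminus * (qp - qm) ^ 2) := by ring
    _ ≤ 4 * ϱ * (area c.Tplus * (4 * (μp - μm) ^ 2 * frobSq Mp)
          + area c.Tminus * (4 * (μp - μm) ^ 2 * frobSq Mm)) := by gcongr
    _ = 16 * ϱ * (μp - μm) ^ 2 * (frobSq Mp * area c.Tplus + frobSq Mm * area c.Tminus) := by
        ring
    _ ≤ (16 * ϱ * (μp - μm) ^ 2 + 1) *
          (frobSq Mp * area c.Tplus + frobSq Mm * area c.Tminus) := by gcongr; linarith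

/-- control of the pressure jump by the velocity: for all `μ⁺, μ⁻ > 0` and
`ϱ > 0` there is `C > 0` depending only on `μ⁺, μ⁻, ϱ` such that for every
`ϱ`-shape-regular cut triangle and every local IFE pair,
`h_T ‖E − D‖ (q⁺ − q⁻)² ≤ C (‖∇v⁺‖_F² |T⁺| + ‖∇v⁻‖_F² |T⁻|)`. -/
theorem statement11 (μp μm ϱ : ℝ) (hμp : 0 < μp) (hμm : 0 < μm) (hϱ : 0 < ϱ) :
    ∃ C : ℝ, 0 < C ∧ ∀ (c : CutTriangle), c.ShapeReg ϱ →
      ∀ (Mp Mm : Matrix (Fin 2) (Fin 2) ℝ) (bp bm : Fin 2 → ℝ) (qp qm : ℝ),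
        c.IsIFEPair μp μm Mp bp Mm bm qp qm →
        c.hT * len (c.E - c.D) * (qp - qm) ^ 2 ≤
          C * (frobSq Mp * area c.Tplus + frobSq Mm * area c.Tminus) :=
  statement11_general μp μm ϱ hϱ

end StokesIFE
end
end

section
/- Let μ⁺ = μ⁻ = μ > 0 and let (v⁺, v⁻, q⁺, q⁻) be a local IFE pair on a cut triangle (T, D, E) as in the setup. Then v⁺ = v⁻ as affine maps on ℝ² and q⁺ = q⁻; that is, when the viscosity has no jump, the immersed CR–P₀ shape functions reduce to globally affine velocities and constant pressures (the standard CR–P₀ element). -/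
open MeasureTheory

noncomputable section

namespace StokesIFE

/-! The jump conditions are linear in the differences `Mp - Mm`, `qp - qm`. With equal
viscosities they force a traceless matrix `Δ` killing the tangent `t` and with `ε(Δ) n ∥ n`.
Reading the trace in the orthonormal frame `(n, t)` gives `⟨n, Δ n⟩ = 0`, hence the pressure
jump vanishes; then `ε(Δ) n = 0`, whose `t`-component is `⟨t, Δ n⟩ / 2`, so `Δ n = 0` as well
and `Δ = 0`. -/

open Matrix

section Frame

variable {n : Fin 2 → ℝ}

theorem eq_zero_of_dot_eq_zero (hn : dot n n = 1) {x : Fin 2 → ℝ} (hxn : dot n x = 0)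
    (hxt : dot ![n 1, -n 0] x = 0) : x = 0 := by
  simp only [dot, cons_val_zero, cons_val_one] at hn hxn hxt
  ext i
  fin_cases i
  · simp only [Fin.zero_eta, Pi.zero_apply]
    linear_combination n 0 * hxn + n 1 * hxt - x 0 * hn
  · simp only [Fin.mk_one, Pi.zero_apply]
    linear_combination n 1 * hxn - n 0 * hxt - x 1 * hn

theorem eq_smul_of_dot_eq_zero (hn : dot n n = 1) {v : Fin 2 → ℝ} (hv : dot n v = 0) :
    v = dot ![n 1, -n 0] v • ![n 1, -n 0] := by
  simp only [dot] at hn hv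
  ext i
  fin_cases i
  · simp only [Fin.zero_eta, dot, cons_val_zero, cons_val_one, Pi.smul_apply, smul_eq_mul]
    linear_combination n 0 * hv - v 0 * hn
  · simp only [Fin.mk_one, dot, cons_val_zero, cons_val_one, Pi.smul_apply, smul_eq_mul]
    linear_combination n 1 * hv - v 1 * hn

theorem matrix_eq_zero_of_mulVec_frame (hn : dot n n = 1) {A : Matrix (Fin 2) (Fin 2) ℝ}
    (hAn : A *ᵥ n = 0) (hAt : A *ᵥ ![n 1, -n 0] = 0) : A = 0 := by
  funext i
  refine eq_zero_of_dot_eq_zero hn ?_ ?_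
  · have h := congrFun hAn i
    simp only [mulVec, dotProduct, Fin.sum_univ_two, Pi.zero_apply] at h
    simp only [dot]
    linear_combination h
  · have h := congrFun hAt i
    simp only [mulVec, dotProduct, Fin.sum_univ_two, cons_val_zero, cons_val_one,
      Pi.zero_apply] at h
    simp only [dot, cons_val_zero, cons_val_one]
    linear_combination h

theorem trace_eq_dot_mulVec_frame (hn : dot n n = 1) (A : Matrix (Fin 2) (Fin 2) ℝ) :
    A.trace = dot n (A *ᵥ n) + dot ![n 1, -n 0] (A *ᵥ ![n 1, -n 0]) := by
  simp only [dot, trace_fin_two, mulVec, dotProduct, Fin.sum_univ_two,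
    cons_val_zero, cons_val_one] at hn ⊢
  linear_combination (-(A 0 0) - A 1 1) * hn

end Frame

theorem two_mul_dot_eps_mulVec (A : Matrix (Fin 2) (Fin 2) ℝ) (x y : Fin 2 → ℝ) :
    2 * dot x (eps A *ᵥ y) = dot x (A *ᵥ y) + dot y (A *ᵥ x) := by
  simp only [dot, eps, mulVec, dotProduct, Fin.sum_univ_two, Matrix.smul_apply,
    Matrix.add_apply, Matrix.transpose_apply, smul_eq_mul]
  ring

theorem sig_mulVec (μ q : ℝ) (A : Matrix (Fin 2) (Fin 2) ℝ) (x : Fin 2 → ℝ) :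
    sig μ A q *ᵥ x = (2 * μ) • (eps A *ᵥ x) - q • x := by
  rw [sig, sub_mulVec, smul_mulVec, smul_mulVec, one_mulVec]

theorem sig_sub_sig (μ p q : ℝ) (A B : Matrix (Fin 2) (Fin 2) ℝ) :
    sig μ A p - sig μ B q = sig μ (A - B) (p - q) := by
  simp only [sig, eps, transpose_sub]
  module

theorem eq_zero_of_sig_mulVec_eq_zero {n : Fin 2 → ℝ} (hn : dot n n = 1) {μ δ : ℝ}
    (hμ : μ ≠ 0) {Δ : Matrix (Fin 2) (Fin 2) ℝ} (hΔt : Δ *ᵥ ![n 1, -n 0] = 0)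
    (htr : Δ.trace = 0) (hσ : sig μ Δ δ *ᵥ n = 0) : Δ = 0 ∧ δ = 0 := by
  have hnn : dot n (Δ *ᵥ n) = 0 := by
    simpa [hΔt, dot] using (trace_eq_dot_mulVec_frame hn Δ).symm.trans htr
  have hδ : δ = 0 := by
    have h := congrArg (dot n) hσ
    rw [sig_mulVec] at h
    have hε := two_mul_dot_eps_mulVec Δ n n
    simp only [dot, Pi.sub_apply, Pi.smul_apply, Pi.zero_apply, smul_eq_mul] at h hε hnn hn
    linear_combination -h + μ * hε + 2 * μ * hnn - δ * hn
  subst hδ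
  have hεn : eps Δ *ᵥ n = 0 := by
    rw [sig_mulVec, zero_smul, sub_zero, smul_eq_zero] at hσ
    exact hσ.resolve_left (mul_ne_zero two_ne_zero hμ)
  have htn : dot ![n 1, -n 0] (Δ *ᵥ n) = 0 := by
    have h := two_mul_dot_eps_mulVec Δ ![n 1, -n 0] n
    rw [hεn, hΔt] at h
    simpa [dot] using h.symm
  exact ⟨matrix_eq_zero_of_mulVec_frame hn (eq_zero_of_dot_eq_zero hn hnn htn) hΔt, rfl⟩

namespace CutTriangle

variable (c : CutTriangle)

theorem D_ne_E : c.D ≠ c.E := by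
  obtain ⟨p, q, -, -, hpq, hDeq⟩ := c.hD
  obtain ⟨r, s, hr, -, hrs, hEeq⟩ := c.hE
  intro h
  have h0 := affineIndependent_iff.mp c.indep Finset.univ ![r, -p, s - q]
    (by simp only [Fin.sum_univ_three, cons_val_zero, cons_val_one, cons_val]; linarith)
    (by
      simp only [Fin.sum_univ_three, cons_val_zero, cons_val_one,
        head_cons, cons_val_two, tail_cons]
      linear_combination (norm := module) hEeq - hDeq - h) 0 (Finset.mem_univ 0)
  simp only [cons_val_zero] at h0
  linarith

theorem exists_E_sub_D_eq_smul_t : ∃ s : ℝ, s ≠ 0 ∧ c.E - c.D = s • c.t := by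
  have h : c.E - c.D = dot c.t (c.E - c.D) • c.t := eq_smul_of_dot_eq_zero c.hn_unit c.hn_orth
  refine ⟨dot c.t (c.E - c.D), fun hs => c.D_ne_E ?_, h⟩
  rw [hs, zero_smul, sub_eq_zero] at h
  exact h.symm

end CutTriangle

/-- when the viscosity has no jump (`μ⁺ = μ⁻ = μ > 0`), every local IFE pair
reduces to a globally affine velocity and a constant pressure: `v⁺ = v⁻` as affine maps on
`ℝ²` and `q⁺ = q⁻`. -/
theorem statement13 (c : CutTriangle) (μ : ℝ) (hμ : 0 < μ)
    (Mp Mm : Matrix (Fin 2) (Fin 2) ℝ) (bp bm : Fin 2 → ℝ) (qp qm : ℝ)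
    (hIFE : c.IsIFEPair μ μ Mp bp Mm bm qp qm) :
    (∀ x : Fin 2 → ℝ, Mp.mulVec x + bp = Mm.mulVec x + bm) ∧ qp = qm := by
  obtain ⟨hσ, hv, htr⟩ := hIFE
  have hD := hv c.D (left_mem_segment ℝ c.D c.E)
  have hE := hv c.E (right_mem_segment ℝ c.D c.E)
  obtain ⟨s, hs, hED⟩ := c.exists_E_sub_D_eq_smul_t
  have hΔt : (Mp - Mm) *ᵥ c.t = 0 := by
    have h : (Mp - Mm) *ᵥ (c.E - c.D) = 0 := by
      simp only [sub_mulVec, mulVec_sub]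
      linear_combination (norm := module) hE - hD
    rwa [hED, mulVec_smul, smul_eq_zero, or_iff_right hs] at h
  obtain ⟨hM, hq⟩ := eq_zero_of_sig_mulVec_eq_zero c.hn_unit hμ.ne' hΔt
    (by rw [trace_sub, htr, sub_self])
    (by rw [← sig_sub_sig, sub_mulVec, hσ, sub_self])
  rw [sub_eq_zero] at hM hq
  subst hM
  have hb : bp = bm := add_left_cancel hD
  exact ⟨fun x => by rw [hb], hq⟩

end StokesIFE
end
end
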